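/- Given η > 0 and h₁, h₂ ∈ ℕ, there exist integers q₁ and q₂ such that the following holds. If A is an η-dense reduced hypergraph with index set [q₁ + q₂], vertex classes P^{ij} and constituents A^{ijk}, then there are indices λ(1) < ⋯ < λ(h₁) in [q₁] and σ(1) < ⋯ < σ(h₂) in [q₁+1, q₁+q₂] satisfying: (i) for each pair 1 ≤ r < s ≤ h₁ there is a vertex P^{λ(r)λ(s)}_red ∈ P^{λ(r)λ(s)}; (ii) for all 1 ≤ r ≤ h₁ and 1 ≤ t ≤ h₂ there are two vertices P^{λ(r)σ(t)}_blue, P^{λ(r)σ(t)}_green ∈ P^{λ(r)σ(t)}; (iii) for every 1 ≤ r < s ≤ h₁ and 1 ≤ t ≤ h₂, the three vertices P^{λ(r)λ(s)}_red, P^{λ(r)σ(t)}_blue and P^{λ(s)σ(t)}_green form a hyperedge of A^{λ(r)λ(s)σ(t)}. -/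

import Mathlib

/-- A reduced hypergraph with index set `{0, 1, …, q−1}`: pairwise disjoint
nonempty vertex classes `P i j` (for distinct indices `i ≠ j`, with `P i j = P j i`)
and, for each triple `i < j < l`, a 3-partite 3-graph (constituent) whose edges
are triples with one vertex in each of `P i j`, `P i l`, `P j l`. -/
structure ReducedHG (q : ℕ) where
  P : ℕ → ℕ → Finset ℕ
  A : ℕ → ℕ → ℕ → Finset (ℕ × ℕ × ℕ)
  P_symm : ∀ i j, P i j = P j i
  P_nonempty : ∀ i j, i < q → j < q → i ≠ j → (P i j).Nonempty
  P_disjoint : ∀ i j i' j', i < j → j < q → i' < j' → j' < q →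
    (i, j) ≠ (i', j') → Disjoint (P i j) (P i' j')
  A_sub : ∀ i j l, i < j → j < l → l < q →
    ∀ e ∈ A i j l, e.1 ∈ P i j ∧ e.2.1 ∈ P i l ∧ e.2.2 ∈ P j l

/-- A reduced hypergraph is `η`-dense if each constituent has at least an
`η`-fraction of all possible edges. -/
def ReducedHG.Dense {q : ℕ} (R : ReducedHG q) (η : ℝ) : Prop :=
  ∀ i j l, i < j → j < l → l < q →
    η * ((R.P i j).card : ℝ) * ((R.P i l).card : ℝ) * ((R.P j l).card : ℝ) ≤
      ((R.A i j l).card : ℝ)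

/-!
Averaging over the vertices of `P^{ab}` gives, for each pair `a < b` of the first block, a
vertex `x_{ab}` whose link `{(y, z) | (x_{ab}, y, z) ∈ A^{abk}}` is `η/2`-dense for at least
`η q₂ / 2` indices `k` of the second block. Colouring `{a, b}` by this set of indices, Ramsey's
theorem gives a large set `Λ` of first-block indices sharing one such set `κ`. For `k ∈ κ` the
links form a dense system of bipartite graphs `H^{ij} ⊆ P^{ik} × P^{jk}` over the pairs of `Λ`,
and every large dense system contains a staircase: indices `i₁ < ⋯ < i_{h₁}` with vertices
`b_i ∈ P^{ik}`, `g_i ∈ P^{ik}` and `(b_i, g_j) ∈ H^{ij}` whenever `i < j`. Pigeonholing over the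
index sets of these staircases leaves `h₂` indices `k` with the same one.

Staircases are found by induction on their length, with a density increment. The first index
`i₀` has a vertex `b` adjacent to half the expected share of `G^j` for many `j`. Colour the pairs
of these `j` by whether `H^{ij}` stays dense towards the neighbourhoods of `b`: on a homogeneous
dense set, a shorter staircase is extended by `b` at `i₀`; on a homogeneous sparse set, the
graphs towards the complements of the neighbourhoods are denser by a fixed amount, which can
happen only boundedly often because densities never exceed `1`.
-/

open Finset

section Counting

variable {α β : Type*}

lemma le_card_filter_of_le_sum {s : Finset α} {f : α → ℝ} {c θ : ℝ} (hc : 0 < c) (hθ : 0 ≤ θ)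
    (hf : ∀ a ∈ s, f a ≤ c) (hsum : θ * #s * c ≤ ∑ a ∈ s, f a) :
    θ / 2 * #s ≤ #{a ∈ s | θ / 2 * c ≤ f a} := by
  have heavy : ∑ a ∈ s with θ / 2 * c ≤ f a, f a ≤ #{a ∈ s | θ / 2 * c ≤ f a} * c := by
    simpa using sum_le_card_nsmul _ _ c fun a ha => hf a (mem_filter.1 ha).1
  have light : ∑ a ∈ s with ¬θ / 2 * c ≤ f a, f a ≤ #s * (θ / 2 * c) :=
    calc _ ≤ #{a ∈ s | ¬θ / 2 * c ≤ f a} * (θ / 2 * c) := by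
          simpa using sum_le_card_nsmul {a ∈ s | ¬θ / 2 * c ≤ f a} f _
            fun a ha => (not_le.1 (mem_filter.1 ha).2).le
      _ ≤ #s * (θ / 2 * c) := by gcongr; exact filter_subset _ _
  rw [← sum_filter_add_sum_filter_not s fun a => θ / 2 * c ≤ f a] at hsum
  exact le_of_mul_le_mul_right (by linarith) hc

lemma exists_mem_le_card_filter_of_le_card_filter {s : Finset α} {t : Finset β} (hs : s.Nonempty)
    (r : α → β → Prop) [∀ a b, Decidable (r a b)] {θ : ℝ}
    (h : ∀ b ∈ t, θ * #s ≤ #{a ∈ s | r a b}) : ∃ a ∈ s, θ * #t ≤ #{b ∈ t | r a b} := by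
  refine exists_le_of_sum_le hs ?_
  calc ∑ _ ∈ s, θ * #t = ∑ _ ∈ t, θ * #s := by simp only [sum_const, nsmul_eq_mul]; ring
    _ ≤ ∑ b ∈ t, (#{a ∈ s | r a b} : ℝ) := sum_le_sum h
    _ = ∑ a ∈ s, (#{b ∈ t | r a b} : ℝ) := by
      exact_mod_cast (sum_card_bipartiteAbove_eq_sum_card_bipartiteBelow r).symm

lemma sub_mul_le_card_filter_not_mem [DecidableEq β] {s : Finset α} {t t' : Finset β}
    {u : Finset (α × β)} {θ δ : ℝ} (hδ : 0 ≤ δ) (ht' : t' ⊆ t) (hden : θ * #s * #t ≤ #u)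
    (hsparse : #{e ∈ u | e.2 ∈ t'} ≤ δ * #s * #t') :
    (θ - δ) * #s * #t ≤ #{e ∈ u | e.2 ∉ t'} := by
  have hsplit : (#u : ℝ) = #{e ∈ u | e.2 ∈ t'} + #{e ∈ u | e.2 ∉ t'} := by
    exact_mod_cast (card_filter_add_card_filter_not (s := u) (fun e => e.2 ∈ t')).symm
  have : δ * #s * #t' ≤ δ * #s * #t := by gcongr
  linarith

variable [DecidableEq α] [DecidableEq β]

lemma card_eq_sum_card_filter_mem {s : Finset α} {t : Finset β} {u : Finset (α × β)}
    (hu : u ⊆ s ×ˢ t) : #u = ∑ a ∈ s, #{b ∈ t | (a, b) ∈ u} :=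
  calc #u = #{e ∈ s ×ˢ t | e ∈ u} := by rw [filter_mem_eq_inter, inter_eq_right.2 hu]
    _ = _ := by simp only [card_filter, sum_product]

lemma le_card_filter_le_degree {s : Finset α} {t : Finset β} {u : Finset (α × β)} {θ : ℝ}
    (hθ : 0 ≤ θ) (ht : t.Nonempty) (hu : u ⊆ s ×ˢ t) (hden : θ * #s * #t ≤ #u) :
    θ / 2 * #s ≤ #{a ∈ s | θ / 2 * #t ≤ #{b ∈ t | (a, b) ∈ u}} := by
  refine le_card_filter_of_le_sum (by exact_mod_cast ht.card_pos) hθ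
    (fun a _ => by exact_mod_cast card_filter_le _ _) ?_
  exact_mod_cast (card_eq_sum_card_filter_mem hu) ▸ hden

lemma exists_mem_le_card_filter_le_degree {ι : Type*} {s : Finset α} {t : ι → Finset β}
    {u : ι → Finset (α × β)} {J : Finset ι} {θ : ℝ} (hθ : 0 ≤ θ) (hs : s.Nonempty)
    (ht : ∀ j ∈ J, (t j).Nonempty) (hu : ∀ j ∈ J, u j ⊆ s ×ˢ t j)
    (hden : ∀ j ∈ J, θ * #s * #(t j) ≤ #(u j)) :
    ∃ a ∈ s, θ / 2 * #J ≤ #{j ∈ J | θ / 2 * #(t j) ≤ #{b ∈ t j | (a, b) ∈ u j}} :=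
  exists_mem_le_card_filter_of_le_card_filter hs _ fun j hj =>
    le_card_filter_le_degree hθ (ht j hj) (hu j hj) (hden j hj)

end Counting

section Ramsey

variable {α γ : Type*} [LinearOrder α]

lemma exists_endHomogeneous (r L : ℕ) :
    ∃ n, ∀ (C : Finset γ) (c : α → α → γ) (S : Finset α), #C ≤ r → (∀ i j, c i j ∈ C) →
      n ≤ #S → ∃ T ⊆ S, #T = L ∧
        ∃ f : α → γ, (∀ i, f i ∈ C) ∧ ∀ i ∈ T, ∀ j ∈ T, i < j → c i j = f i := by
  classical
  induction L with
  | zero => exact ⟨0, fun C c S _ hc _ => ⟨∅, empty_subset _, rfl, fun i => c i i,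
      fun i => hc i i, by simp⟩⟩
  | succ L ih =>
    obtain ⟨n, hn⟩ := ih
    refine ⟨r * n + 2, fun C c S hC hc hS => ?_⟩
    have hne : S.Nonempty := card_pos.1 (by omega)
    set i₀ := S.min' hne
    have hcard : #C * n < #(S.erase i₀) := by
      rw [card_erase_of_mem (min'_mem S hne)]
      have := Nat.mul_le_mul_right n hC
      omega
    obtain ⟨γ₀, hγ₀, hfib⟩ :=
      exists_lt_card_fiber_of_mul_lt_card_of_maps_to (fun j _ => hc i₀ j) hcard
    obtain ⟨T, hTS, hT, f, hfC, hf⟩ := hn C c _ hC hc hfib.le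
    have hlt : ∀ j ∈ T, i₀ < j := fun j hj =>
      min'_lt_of_mem_erase_min' _ _ (mem_filter.1 (hTS hj)).1
    have hi₀T : i₀ ∉ T := fun h => lt_irrefl _ (hlt i₀ h)
    refine ⟨insert i₀ T, insert_subset (min'_mem S hne) fun j hj =>
        mem_of_mem_erase (mem_filter.1 (hTS hj)).1, by rw [card_insert_of_notMem hi₀T, hT],
      Function.update f i₀ γ₀, fun i => ?_, fun i hi j hj hij => ?_⟩
    · rcases eq_or_ne i i₀ with rfl | h
      · simpa using hγ₀
      · simpa [h] using hfC i
    rcases mem_insert.1 hi with rfl | hiT <;> rcases mem_insert.1 hj with rfl | hjT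
    · exact absurd hij (lt_irrefl _)
    · simpa using (mem_filter.1 (hTS hjT)).2
    · exact absurd hij (hlt i hiT).asymm
    · simpa [(hlt i hiT).ne'] using hf i hiT j hjT hij

theorem exists_ramsey (r M : ℕ) :
    ∃ n, ∀ (C : Finset γ) (c : α → α → γ) (S : Finset α), #C ≤ r → (∀ i j, c i j ∈ C) →
      n ≤ #S → ∃ T ⊆ S, #T = M ∧ ∃ γ₀, ∀ i ∈ T, ∀ j ∈ T, i < j → c i j = γ₀ := by
  classical
  obtain ⟨n, hn⟩ := exists_endHomogeneous (α := α) (γ := γ) r (r * M + 1)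
  refine ⟨n, fun C c S hC hc hS => ?_⟩
  obtain ⟨T, hTS, hT, f, hfC, hf⟩ := hn C c S hC hc hS
  have hcard : #C * M < #T := by
    have := Nat.mul_le_mul_right M hC
    omega
  obtain ⟨γ₀, -, hfib⟩ := exists_lt_card_fiber_of_mul_lt_card_of_maps_to (fun i _ => hfC i) hcard
  obtain ⟨T', hT'sub, hT'⟩ := exists_subset_card_eq hfib.le
  have hT'T : ∀ i ∈ T', i ∈ T ∧ f i = γ₀ := fun i hi => mem_filter.1 (hT'sub hi)
  refine ⟨T', fun i hi => hTS (hT'T i hi).1, hT', γ₀, fun i hi j hj hij => ?_⟩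
  rw [hf i (hT'T i hi).1 j (hT'T j hj).1 hij, (hT'T i hi).2]

end Ramsey

section Staircase

variable {ι V W : Type*} [LinearOrder ι]

def IsDenseSystem (Q : ι → Finset V) (G : ι → Finset W) (H : ι → ι → Finset (V × W))
    (S : Finset ι) (β : ℝ) : Prop :=
  (∀ i ∈ S, (Q i).Nonempty ∧ (G i).Nonempty) ∧
    ∀ i ∈ S, ∀ j ∈ S, i < j → H i j ⊆ Q i ×ˢ G j ∧ β * #(Q i) * #(G j) ≤ #(H i j)

def IsStaircase (Q : ι → Finset V) (G : ι → Finset W) (H : ι → ι → Finset (V × W))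
    (T : Finset ι) (b : ι → V) (g : ι → W) : Prop :=
  (∀ i ∈ T, b i ∈ Q i ∧ g i ∈ G i) ∧ ∀ i ∈ T, ∀ j ∈ T, i < j → (b i, g j) ∈ H i j

def HasStaircase (Q : ι → Finset V) (G : ι → Finset W) (H : ι → ι → Finset (V × W))
    (S : Finset ι) (m : ℕ) : Prop :=
  ∃ T ⊆ S, #T = m ∧ ∃ b g, IsStaircase Q G H T b g

variable (ι V W) in
def ForcesStaircase (β : ℝ) (m n : ℕ) : Prop :=
  ∀ (Q : ι → Finset V) (G : ι → Finset W) (H : ι → ι → Finset (V × W)) (S : Finset ι),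
    n ≤ #S → IsDenseSystem Q G H S β → HasStaircase Q G H S m

section

variable {Q : ι → Finset V} {G : ι → Finset W} {H : ι → ι → Finset (V × W)} {S T : Finset ι}
  {β : ℝ}

lemma IsDenseSystem.mono (h : IsDenseSystem Q G H S β) (hTS : T ⊆ S) :
    IsDenseSystem Q G H T β :=
  ⟨fun i hi => h.1 i (hTS hi), fun i hi j hj => h.2 i (hTS hi) j (hTS hj)⟩

lemma IsDenseSystem.le_one (h : IsDenseSystem Q G H S β) (hS : 1 < #S) : β ≤ 1 := by
  have hne : S.Nonempty := card_pos.1 (by omega)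
  obtain ⟨hsub, hden⟩ := h.2 _ (min'_mem S hne) _ (max'_mem S hne) (min'_lt_max'_of_card S hS)
  have hQ := (h.1 _ (min'_mem S hne)).1.card_pos
  have hG := (h.1 _ (max'_mem S hne)).2.card_pos
  have hle : (#(H (S.min' hne) (S.max' hne)) : ℝ) ≤ #(Q (S.min' hne)) * #(G (S.max' hne)) := by
    exact_mod_cast (card_le_card hsub).trans (card_product _ _).le
  have hpos : (0 : ℝ) < #(Q (S.min' hne)) * #(G (S.max' hne)) := by positivity
  nlinarith

lemma IsDenseSystem.restrict_right [DecidableEq W] (h : IsDenseSystem Q G H S β)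
    {G' : ι → Finset W} {δ : ℝ} (hG' : ∀ i ∈ S, (G' i).Nonempty)
    (hden : ∀ i ∈ S, ∀ j ∈ S, i < j → δ * #(Q i) * #(G' j) ≤ #{e ∈ H i j | e.2 ∈ G' j}) :
    IsDenseSystem Q G' (fun i j => {e ∈ H i j | e.2 ∈ G' j}) S δ := by
  refine ⟨fun i hi => ⟨(h.1 i hi).1, hG' i hi⟩, fun i hi j hj hij => ⟨fun e he => ?_,
    hden i hi j hj hij⟩⟩
  obtain ⟨he, he'⟩ := mem_filter.1 he
  exact mem_product.2 ⟨(mem_product.1 ((h.2 i hi j hj hij).1 he)).1, he'⟩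

lemma IsDenseSystem.sdiff_right [DecidableEq W] (h : IsDenseSystem Q G H S β) (hS : S.Nonempty)
    {G' : ι → Finset W} {δ β' : ℝ} (hδ : 0 ≤ δ) (hδβ : δ < β) (hβ' : 0 ≤ β')
    (hβ'β : β' * (1 - β / 2) ≤ β - δ) (hG'G : ∀ i ∈ S, G' i ⊆ G i)
    (hG' : ∀ i ∈ S, β / 2 * #(G i) ≤ #(G' i))
    (hsparse : ∀ i ∈ S, ∀ j ∈ S, i < j → #{e ∈ H i j | e.2 ∈ G' j} ≤ δ * #(Q i) * #(G' j)) :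
    IsDenseSystem Q (fun i => G i \ G' i) (fun i j => {e ∈ H i j | e.2 ∉ G' j})
      (S.erase (S.min' hS)) β' := by
  have hmass : ∀ i ∈ S, ∀ j ∈ S, i < j →
      (β - δ) * #(Q i) * #(G j) ≤ #{e ∈ H i j | e.2 ∉ G' j} := fun i hi j hj hij =>
    sub_mul_le_card_filter_not_mem hδ (hG'G j hj) (h.2 i hi j hj hij).2 (hsparse i hi j hj hij)
  have hsub : ∀ i ∈ S, ∀ j ∈ S, i < j →
      {e ∈ H i j | e.2 ∉ G' j} ⊆ Q i ×ˢ (G j \ G' j) := by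
    intro i hi j hj hij e he
    obtain ⟨he, he'⟩ := mem_filter.1 he
    obtain ⟨h1, h2⟩ := mem_product.1 ((h.2 i hi j hj hij).1 he)
    exact mem_product.2 ⟨h1, mem_sdiff.2 ⟨h2, he'⟩⟩
  set i₀ := S.min' hS
  refine ⟨fun j hj => ⟨(h.1 j (mem_of_mem_erase hj)).1, ?_⟩, fun i hi j hj hij => ⟨?_, ?_⟩⟩
  · have hi₀j : i₀ < j := min'_lt_of_mem_erase_min' _ _ hj
    have hj := mem_of_mem_erase hj
    have hpos : (0 : ℝ) < #{e ∈ H i₀ j | e.2 ∉ G' j} := by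
      have := (h.1 i₀ (min'_mem S hS)).1.card_pos
      have := (h.1 j hj).2.card_pos
      have : (0 : ℝ) < (β - δ) * #(Q i₀) * #(G j) := by
        have : (0 : ℝ) < β - δ := by linarith
        positivity
      linarith [hmass i₀ (min'_mem S hS) j hj hi₀j]
    obtain ⟨e, he⟩ := card_pos.1 (by exact_mod_cast hpos)
    exact ⟨e.2, (mem_product.1 (hsub i₀ (min'_mem S hS) j hj hi₀j he)).2⟩
  · exact hsub i (mem_of_mem_erase hi) j (mem_of_mem_erase hj) hij
  · have hi := mem_of_mem_erase hi
    have hj := mem_of_mem_erase hj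
    have hcard : (#(G j \ G' j) : ℝ) ≤ (1 - β / 2) * #(G j) := by
      rw [card_sdiff_of_subset (hG'G j hj), Nat.cast_sub (card_le_card (hG'G j hj))]
      linarith [hG' j hj]
    calc β' * #(Q i) * #(G j \ G' j) ≤ β' * #(Q i) * ((1 - β / 2) * #(G j)) := by gcongr
      _ = β' * (1 - β / 2) * #(Q i) * #(G j) := by ring
      _ ≤ (β - δ) * #(Q i) * #(G j) := by gcongr
      _ ≤ _ := hmass i hi j hj hij

lemma IsStaircase.mono {G' : ι → Finset W} {H' : ι → ι → Finset (V × W)} {b : ι → V}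
    {g : ι → W} (h : IsStaircase Q G' H' T b g) (hG : ∀ i ∈ T, G' i ⊆ G i)
    (hH : ∀ i ∈ T, ∀ j ∈ T, i < j → H' i j ⊆ H i j) : IsStaircase Q G H T b g :=
  ⟨fun i hi => ⟨(h.1 i hi).1, hG i hi (h.1 i hi).2⟩,
    fun i hi j hj hij => hH i hi j hj hij (h.2 i hi j hj hij)⟩

lemma IsStaircase.insert {b : ι → V} {g : ι → W} {i₀ : ι} {b₀ : V} {g₀ : W}
    (h : IsStaircase Q G H T b g) (hi₀ : ∀ j ∈ T, i₀ < j) (hb₀ : b₀ ∈ Q i₀) (hg₀ : g₀ ∈ G i₀)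
    (hlink : ∀ j ∈ T, (b₀, g j) ∈ H i₀ j) :
    IsStaircase Q G H (insert i₀ T) (Function.update b i₀ b₀) (Function.update g i₀ g₀) := by
  refine ⟨fun i hi => ?_, fun i hi j hj hij => ?_⟩
  · rcases mem_insert.1 hi with rfl | hi
    · simpa using ⟨hb₀, hg₀⟩
    · simpa [(hi₀ i hi).ne'] using h.1 i hi
  rcases mem_insert.1 hi with rfl | hiT <;> rcases mem_insert.1 hj with rfl | hjT
  · exact absurd hij (lt_irrefl _)
  · simpa [(hi₀ j hjT).ne'] using hlink j hjT
  · exact absurd hij (hi₀ i hiT).asymm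
  · simpa [(hi₀ i hiT).ne', (hi₀ j hjT).ne'] using h.2 i hiT j hjT hij

lemma HasStaircase.mono {G' : ι → Finset W} {H' : ι → ι → Finset (V × W)} {m : ℕ}
    (h : HasStaircase Q G' H' T m) (hTS : T ⊆ S) (hG : ∀ i ∈ T, G' i ⊆ G i)
    (hH : ∀ i ∈ T, ∀ j ∈ T, i < j → H' i j ⊆ H i j) : HasStaircase Q G H S m := by
  obtain ⟨U, hUT, hU, b, g, hst⟩ := h
  exact ⟨U, hUT.trans hTS, hU, b, g, hst.mono (fun i hi => hG i (hUT hi))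
    fun i hi j hj => hH i (hUT hi) j (hUT hj)⟩

lemma HasStaircase.extend [DecidableEq V] [DecidableEq W] {H' : ι → ι → Finset (V × W)}
    {i₀ : ι} {b₀ : V} {m : ℕ} (h : HasStaircase Q (fun j => {w ∈ G j | (b₀, w) ∈ H i₀ j}) H' T m)
    (hH' : ∀ i ∈ T, ∀ j ∈ T, i < j → H' i j ⊆ H i j) (hi₀ : ∀ j ∈ T, i₀ < j) (hb₀ : b₀ ∈ Q i₀)
    (hG₀ : (G i₀).Nonempty) : HasStaircase Q G H (insert i₀ T) (m + 1) := by
  obtain ⟨U, hUT, hU, b, g, hst⟩ := h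
  have hi₀U : ∀ j ∈ U, i₀ < j := fun j hj => hi₀ j (hUT hj)
  refine ⟨insert i₀ U, insert_subset_insert _ hUT,
    by rw [card_insert_of_notMem fun h => lt_irrefl _ (hi₀U i₀ h), hU], _, _,
    (hst.mono (fun _ _ => filter_subset _ _) fun i hi j hj => hH' i (hUT hi) j (hUT hj)).insert
      hi₀U hb₀ hG₀.choose_spec fun j hj => (mem_filter.1 (hst.1 j hj).2).2⟩

lemma IsDenseSystem.exists_heavy_vertex [DecidableEq V] [DecidableEq W]
    (h : IsDenseSystem Q G H S β) (hβ : 0 ≤ β) (hS : S.Nonempty) :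
    ∃ b ∈ Q (S.min' hS), β / 2 * #(S.erase (S.min' hS)) ≤
      #{j ∈ S.erase (S.min' hS) | β / 2 * #(G j) ≤ #{w ∈ G j | (b, w) ∈ H (S.min' hS) j}} := by
  have hrel := fun j (hj : j ∈ S.erase (S.min' hS)) =>
    h.2 _ (min'_mem S hS) j (mem_of_mem_erase hj) (min'_lt_of_mem_erase_min' _ _ hj)
  exact exists_mem_le_card_filter_le_degree hβ (h.1 _ (min'_mem S hS)).1
    (fun j hj => (h.1 j (mem_of_mem_erase hj)).2) (fun j hj => (hrel j hj).1)
    (fun j hj => (hrel j hj).2)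

lemma forcesStaircase_zero : ForcesStaircase ι V W β 0 1 := by
  intro Q G H S hS h
  obtain ⟨i, hi⟩ := card_pos.1 (by omega : 0 < #S)
  obtain ⟨⟨v, -⟩, ⟨w, -⟩⟩ := h.1 i hi
  exact ⟨∅, empty_subset _, rfl, fun _ => v, fun _ => w, by simp [IsStaircase]⟩

lemma forcesStaircase_of_one_lt {m : ℕ} (hβ : 1 < β) : ForcesStaircase ι V W β m 2 :=
  fun _ _ _ _ hS h => absurd (h.le_one (by omega)) (not_le.2 hβ)

end

variable {β : ℝ}

lemma forcesStaircase_succ_of_increment {β₀ : ℝ} {m n₁ n₂ : ℕ} (hβ₀ : 0 < β₀) (hβ : β₀ ≤ β)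
    (hβ1 : β ≤ 1) (h₁ : ForcesStaircase ι V W (β₀ ^ 2 / 8) m n₁)
    (h₂ : ForcesStaircase ι V W (β + β₀ ^ 2 / 4) (m + 1) n₂) :
    ∃ n, ForcesStaircase ι V W β (m + 1) n := by
  classical
  set δ := β₀ ^ 2 / 8 with hδ
  have hβpos : 0 < β := hβ₀.trans_le hβ
  have hsq : β₀ ^ 2 ≤ β ^ 2 := by gcongr
  have hδβ : δ < β := by nlinarith
  have hincrement : (β + β₀ ^ 2 / 4) * (1 - β / 2) ≤ β - δ := by
    nlinarith [mul_nonneg hβpos.le (sq_nonneg β₀)]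
  obtain ⟨r, hr⟩ := exists_ramsey (α := ι) (γ := Bool) 2 (max n₁ (n₂ + 1))
  obtain ⟨k, hk⟩ := exists_nat_ge (2 * r / β)
  refine ⟨k + 1, fun Q G H S hS h => ?_⟩
  have hSne : S.Nonempty := card_pos.1 (by omega)
  set i₀ := S.min' hSne
  have hlt : ∀ j ∈ S.erase i₀, i₀ < j := fun j hj => min'_lt_of_mem_erase_min' _ _ hj
  obtain ⟨b₀, hb₀, hmany⟩ := h.exists_heavy_vertex hβpos.le hSne
  set N : ι → Finset W := fun j => {w ∈ G j | (b₀, w) ∈ H i₀ j}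
  set T := {j ∈ S.erase i₀ | β / 2 * #(G j) ≤ #(N j)}
  have hrT : r ≤ #T := by
    have hS' : (k : ℝ) ≤ #(S.erase i₀) := by
      rw [card_erase_of_mem (min'_mem S hSne)]; exact_mod_cast (by omega : k ≤ #S - 1)
    have : (r : ℝ) ≤ β / 2 * #(S.erase i₀) := by
      rw [div_le_iff₀' hβpos] at hk; nlinarith
    exact_mod_cast this.trans hmany
  obtain ⟨U, hUT, hU, c, hc⟩ := hr univ
    (fun i j => decide (δ * #(Q i) * #(N j) ≤ #{e ∈ H i j | e.2 ∈ N j})) T (by simp)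
    (fun _ _ => mem_univ _) hrT
  have hUS : U ⊆ S.erase i₀ := hUT.trans (filter_subset _ _)
  have hUN : ∀ j ∈ U, β / 2 * #(G j) ≤ #(N j) := fun j hj => (mem_filter.1 (hUT hj)).2
  have hsysU := h.mono (hUS.trans (erase_subset _ _))
  cases c
  · have hUne : U.Nonempty := card_pos.1 (by omega)
    exact (h₂ Q _ _ _ (by rw [card_erase_of_mem (min'_mem U hUne)]; omega)
      (hsysU.sdiff_right hUne (by positivity) hδβ (by positivity) hincrement
        (fun _ _ => filter_subset _ _) hUN
        fun i hi j hj hij => (not_le.1 (of_decide_eq_false (hc i hi j hj hij))).le)).mono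
      ((erase_subset _ _).trans (hUS.trans (erase_subset _ _))) (fun _ _ => sdiff_subset)
      fun _ _ _ _ _ => filter_subset _ _
  · have hNne : ∀ j ∈ U, (N j).Nonempty := fun j hj => by
      have := (hsysU.1 j hj).2.card_pos
      have : (0 : ℝ) < #(N j) := lt_of_lt_of_le (by positivity) (hUN j hj)
      exact card_pos.1 (by exact_mod_cast this)
    exact ((h₁ Q N _ U (by omega) (hsysU.restrict_right hNne fun i hi j hj hij =>
      of_decide_eq_true (hc i hi j hj hij))).extend (fun _ _ _ _ _ => filter_subset _ _)
      (fun j hj => hlt j (hUS hj)) hb₀ (h.1 i₀ (min'_mem S hSne)).2).mono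
      (insert_subset (min'_mem S hSne) (hUS.trans (erase_subset _ _)))
      (fun _ _ => subset_rfl) fun _ _ _ _ _ => subset_rfl

theorem exists_forcesStaircase (m : ℕ) (hβ : 0 < β) : ∃ n, ForcesStaircase ι V W β m n := by
  induction m generalizing β with
  | zero => exact ⟨1, forcesStaircase_zero⟩
  | succ m ih =>
    obtain ⟨n₁, h₁⟩ := ih (by positivity : 0 < β ^ 2 / 8)
    -- `N` bounds the number of density increments by `β ^ 2 / 4` before the density exceeds `1`
    have of_increments : ∀ N : ℕ, ∀ β', β ≤ β' → 1 < β' + N * (β ^ 2 / 4) →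
        ∃ n, ForcesStaircase ι V W β' (m + 1) n := by
      intro N
      induction N with
      | zero => exact fun β' _ h => ⟨2, forcesStaircase_of_one_lt (by simpa using h)⟩
      | succ N ihN =>
        intro β' hβ' h
        by_cases h1 : 1 < β'
        · exact ⟨2, forcesStaircase_of_one_lt h1⟩
        obtain ⟨n₂, h₂⟩ := ihN (β' + β ^ 2 / 4) (by nlinarith) (by push_cast at h; linarith)
        exact forcesStaircase_succ_of_increment hβ hβ' (not_lt.1 h1) h₁ h₂
    obtain ⟨N, hN⟩ := exists_nat_gt (4 / β ^ 2)
    refine of_increments N β le_rfl ?_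
    rw [div_lt_iff₀ (by positivity)] at hN
    nlinarith

lemma exists_common_staircase {κ : Type*} {Q : κ → ι → Finset V} {G : κ → ι → Finset W}
    {H : κ → ι → ι → Finset (V × W)} {S : Finset ι} {K : Finset κ} {m l : ℕ}
    (hK : (#S).choose m * l < #K) (hst : ∀ k ∈ K, HasStaircase (Q k) (G k) (H k) S m) :
    ∃ T ⊆ S, #T = m ∧ ∃ K' ⊆ K, #K' = l ∧ ∃ (b : κ → ι → V) (g : κ → ι → W),
      ∀ k ∈ K', IsStaircase (Q k) (G k) (H k) T (b k) (g k) := by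
  classical
  obtain ⟨k₀, hk₀⟩ : K.Nonempty := card_pos.1 (by omega)
  obtain ⟨-, -, -, b₀, g₀, -⟩ := hst k₀ hk₀
  have : Nonempty (ι → V) := ⟨b₀⟩
  have : Nonempty (ι → W) := ⟨g₀⟩
  choose! T hTS hTm b g hbg using hst
  obtain ⟨T₀, hT₀, hfib⟩ := exists_lt_card_fiber_of_mul_lt_card_of_maps_to
    (fun k hk => mem_powersetCard.2 ⟨hTS k hk, hTm k hk⟩) (by rwa [card_powersetCard])
  obtain ⟨K', hK'sub, hK'⟩ := exists_subset_card_eq hfib.le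
  obtain ⟨hT₀S, hT₀m⟩ := mem_powersetCard.1 hT₀
  refine ⟨T₀, hT₀S, hT₀m, K', hK'sub.trans (filter_subset _ _), hK', b, g, fun k hk => ?_⟩
  obtain ⟨hkK, rfl⟩ := mem_filter.1 (hK'sub hk)
  exact hbg k hkK

end Staircase

namespace ReducedHG

variable {q : ℕ} (R : ReducedHG q)

/-- `ℕ × ℕ × ℕ` is `ℕ × (ℕ × ℕ)`, so this is the fibre of `A^{ijk}` over `x`: the link of `x`. -/
def link (i j k x : ℕ) : Finset (ℕ × ℕ) := {p ∈ R.P i k ×ˢ R.P j k | (x, p) ∈ R.A i j k}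

lemma exists_mem_le_card_dense_links {η : ℝ} (hη : 0 ≤ η) (hR : R.Dense η) {a b : ℕ}
    (hab : a < b) (hbq : b < q) {K : Finset ℕ} (hK : ∀ k ∈ K, b < k ∧ k < q) :
    ∃ x ∈ R.P a b,
      η / 2 * #K ≤ #{k ∈ K | η / 2 * #(R.P a k ×ˢ R.P b k) ≤ #(R.link a b k x)} := by
  refine exists_mem_le_card_filter_le_degree hη (R.P_nonempty a b (by omega) hbq hab.ne)
    (fun k hk => ?_) (fun k hk e he => ?_) (fun k hk => ?_)
  · obtain ⟨hbk, hkq⟩ := hK k hk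
    exact (R.P_nonempty a k (by omega) hkq (by omega)).product
      (R.P_nonempty b k hbq hkq (by omega))
  · obtain ⟨h₁, h₂, h₃⟩ := R.A_sub a b k hab (hK k hk).1 (hK k hk).2 e he
    exact mem_product.2 ⟨h₁, mem_product.2 ⟨h₂, h₃⟩⟩
  · simpa [card_product, mul_assoc] using hR a b k hab (hK k hk).1 (hK k hk).2

lemma isDenseSystem_link (x : ℕ → ℕ → ℕ) {Λ : Finset ℕ} {k : ℕ} {θ : ℝ}
    (hΛ : ∀ i ∈ Λ, i < k) (hk : k < q)
    (hx : ∀ i ∈ Λ, ∀ j ∈ Λ, i < j → θ * #(R.P i k ×ˢ R.P j k) ≤ #(R.link i j k (x i j))) :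
    IsDenseSystem (R.P · k) (R.P · k) (fun i j => R.link i j k (x i j)) Λ θ := by
  refine ⟨fun i hi => ?_, fun i hi j hj hij => ⟨filter_subset _ _, ?_⟩⟩
  · have := R.P_nonempty i k ((hΛ i hi).trans hk) hk (hΛ i hi).ne
    exact ⟨this, this⟩
  · simpa [card_product, mul_assoc] using hx i hi j hj hij

end ReducedHG

lemma ReducedHG.exists_dense_link_systems {q₁ q₂ N : ℕ} (R : ReducedHG (q₁ + q₂)) {η : ℝ}
    (hη : 0 < η) (hR : R.Dense η) (hN : 2 ≤ N)
    (hq₁ : ∀ c : ℕ → ℕ → Finset ℕ, (∀ i j, c i j ⊆ Ico q₁ (q₁ + q₂)) →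
      ∃ Λ ⊆ range q₁, #Λ = N ∧ ∃ κ, ∀ i ∈ Λ, ∀ j ∈ Λ, i < j → c i j = κ) :
    ∃ x : ℕ → ℕ → ℕ, ∃ Λ ⊆ range q₁, #Λ = N ∧ (∀ i ∈ Λ, ∀ j ∈ Λ, i < j → x i j ∈ R.P i j) ∧
      ∃ κ ⊆ Ico q₁ (q₁ + q₂), η / 2 * q₂ ≤ #κ ∧
        ∀ k ∈ κ, IsDenseSystem (R.P · k) (R.P · k) (fun i j => R.link i j k (x i j)) Λ (η / 2) := by
  set K := Ico q₁ (q₁ + q₂)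
  choose! x hx using fun a b (hab : a < b) (hb : b < q₁) =>
    R.exists_mem_le_card_dense_links hη.le hR hab (by omega) (K := K)
      fun k hk => by have := mem_Ico.1 hk; omega
  obtain ⟨Λ, hΛ, hΛN, κ, hκ⟩ :=
    hq₁ (fun a b => {k ∈ K | η / 2 * #(R.P a k ×ˢ R.P b k) ≤ #(R.link a b k (x a b))})
      fun _ _ => filter_subset _ _
  have hΛq₁ : ∀ i ∈ Λ, i < q₁ := fun i hi => mem_range.1 (hΛ hi)
  have hΛne : Λ.Nonempty := card_pos.1 (by omega)
  have hpair := min'_lt_max'_of_card Λ (by omega)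
  have hκ₀ := hκ _ (min'_mem _ hΛne) _ (max'_mem _ hΛne) hpair
  have hκK : κ ⊆ K := hκ₀ ▸ filter_subset _ _
  obtain ⟨-, hcard⟩ := hx _ _ hpair (hΛq₁ _ (max'_mem _ hΛne))
  rw [hκ₀] at hcard
  refine ⟨x, Λ, hΛ, hΛN, fun i hi j hj hij => (hx i j hij (hΛq₁ j hj)).1, κ, hκK,
    by simpa [K] using hcard, fun k hk => ?_⟩
  obtain ⟨hq₁k, hkq⟩ := mem_Ico.1 (hκK hk)
  refine R.isDenseSystem_link x (fun i hi => (hΛq₁ i hi).trans_le hq₁k) hkq fun i hi j hj hij => ?_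
  rw [← hκ i hi j hj hij] at hk
  exact (mem_filter.1 hk).2


/-- Given `η > 0` and `h₁, h₂`, there are `q₁, q₂` such that
every `η`-dense reduced hypergraph with index set `[q₁ + q₂]` contains indices
`λ(1) < ⋯ < λ(h₁)` in `[q₁]` and `σ(1) < ⋯ < σ(h₂)` in `[q₁+1, q₁+q₂]` together
with vertices `P^{λ(r)λ(s)}_red`, `P^{λ(r)σ(t)}_blue`, `P^{λ(r)σ(t)}_green` such
that for all `r < s ≤ h₁` and `t ≤ h₂`, the vertices `P^{λ(r)λ(s)}_red`,
`P^{λ(r)σ(t)}_blue`, `P^{λ(s)σ(t)}_green` form an edge of `A^{λ(r)λ(s)σ(t)}`. -/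
theorem reduced_hypergraph_bipartite_embedding (η : ℝ) (hη : 0 < η)
    (h₁ h₂ : ℕ) :
    ∃ q₁ q₂ : ℕ, ∀ R : ReducedHG (q₁ + q₂), R.Dense η →
      ∃ lam : Fin h₁ → ℕ, ∃ sig : Fin h₂ → ℕ,
        StrictMono lam ∧ (∀ r, lam r < q₁) ∧
        StrictMono sig ∧ (∀ t, q₁ ≤ sig t ∧ sig t < q₁ + q₂) ∧
        ∃ Pr Pb Pg : ℕ → ℕ → ℕ,
          (∀ r s : Fin h₁, r < s →
            Pr (lam r) (lam s) ∈ R.P (lam r) (lam s)) ∧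
          (∀ (r : Fin h₁) (t : Fin h₂),
            Pb (lam r) (sig t) ∈ R.P (lam r) (sig t) ∧
            Pg (lam r) (sig t) ∈ R.P (lam r) (sig t)) ∧
          ∀ (r s : Fin h₁) (t : Fin h₂), r < s →
            (Pr (lam r) (lam s), Pb (lam r) (sig t), Pg (lam s) (sig t)) ∈
              R.A (lam r) (lam s) (sig t) := by
  obtain ⟨n, hn⟩ := exists_forcesStaircase (ι := ℕ) (V := ℕ) (W := ℕ) h₁ (half_pos hη)
  set N := max n 2
  obtain ⟨q₂, hq₂⟩ := exists_nat_gt ((N.choose h₁ * h₂ : ℕ) / (η / 2))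
  obtain ⟨q₁, hq₁⟩ := exists_ramsey (α := ℕ) (γ := Finset ℕ) (2 ^ q₂) N
  refine ⟨q₁, q₂, fun R hR => ?_⟩
  obtain ⟨x, Λ, hΛ, hΛN, hx, κ, hκ, hκ_card, hsys⟩ :=
    R.exists_dense_link_systems hη hR (le_max_right _ _) fun c hc =>
      hq₁ _ c _ (by simp) (fun i j => mem_powerset.2 (hc i j)) (by simp)
  have hκ_big : (#Λ).choose h₁ * h₂ < #κ := by
    have := (div_lt_iff₀ (half_pos hη)).1 hq₂
    have : ((N.choose h₁ * h₂ : ℕ) : ℝ) < #κ := by linarith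
    exact hΛN ▸ by exact_mod_cast this
  obtain ⟨τ, hτΛ, hτ, K, hKκ, hK, b, g, hst⟩ := exists_common_staircase hκ_big fun k hk =>
    hn _ _ _ Λ (hΛN ▸ le_max_left _ _) (hsys k hk)
  have hlam := fun r => hτΛ (τ.orderEmbOfFin_mem hτ r)
  refine ⟨τ.orderEmbOfFin hτ, K.orderEmbOfFin hK, (τ.orderEmbOfFin hτ).strictMono,
    fun r => mem_range.1 (hΛ (hlam r)), (K.orderEmbOfFin hK).strictMono,
    fun t => mem_Ico.1 (hκ (hKκ (K.orderEmbOfFin_mem hK t))), x, fun a k => b k a,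
    fun a k => g k a, fun r s hrs => hx _ (hlam r) _ (hlam s) ((τ.orderEmbOfFin hτ).strictMono hrs),
    fun r t => (hst _ (K.orderEmbOfFin_mem hK t)).1 _ (τ.orderEmbOfFin_mem hτ r),
    fun r s t hrs => ?_⟩
  exact (mem_filter.1 ((hst _ (K.orderEmbOfFin_mem hK t)).2 _ (τ.orderEmbOfFin_mem hτ r) _
    (τ.orderEmbOfFin_mem hτ s) ((τ.orderEmbOfFin hτ).strictMono hrs))).2
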